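/- arXiv:2012.02270 — 4 statements merged into one kernel-verified Lean document; each statement's English description precedes it below -/
import Mathlib

section
/- Let K ∈ GL_n(ℂ) and m a positive integer. Then there exists K̂ ∈ GL_n(ℂ) with K̂^m = K such that every A ∈ GL_n(ℂ) commuting with K also commutes with K̂. -/
/-!
Work in the bicommutant `S` of `K`: it is a finite-dimensional commutative Banach algebra containing
`K` and `K⁻¹`, and every `A` commuting with `K` commutes with all of `S`. The unit group of `S` is
connected, because the segment `t ↦ 1 + t (K - 1)` in `S` leaves the units only at the finitely
many `t` with `1 - t⁻¹` in the spectrum of `K`, and we can go around them in `ℂ`. The exponentials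
form a subgroup of `Sˣ` (as `S` is commutative) which is open by the inverse function theorem,
hence also closed, hence all of `Sˣ`. So `K = exp L` with `L ∈ S`, and `K̂ = exp (L / m)` works.
-/

open NormedSpace Topology

theorem spectrum.finite_of_finiteDimensional {K A : Type*} [Field K] [Ring A] [Algebra K A]
    [FiniteDimensional K A] (a : A) : (spectrum K a).Finite := by
  nontriviality A
  have hp : minpoly K a ≠ 0 := minpoly.ne_zero (Algebra.IsIntegral.isIntegral a)
  refine (Polynomial.finite_setOfPred_isRoot hp).subset fun r hr => ?_
  simpa [spectrum.zero_eq] using spectrum.subset_polynomial_aeval a (minpoly K a) ⟨r, hr, rfl⟩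

section FiniteDimensional

variable {A : Type*} [NormedRing A] [NormedAlgebra ℂ A] [FiniteDimensional ℂ A]

lemma finite_setOf_not_isUnit_lineMap (u : A) :
    {t : ℂ | ¬IsUnit (AffineMap.lineMap 1 u t)}.Finite := by
  refine ((spectrum.finite_of_finiteDimensional u).image fun s => (1 - s)⁻¹).subset ?_
  intro t ht
  have ht0 : t ≠ 0 := by rintro rfl; simp at ht
  refine ⟨1 - t⁻¹, ?_, by simp⟩
  have hscale : algebraMap ℂ A (1 - t⁻¹) - u = (-t⁻¹) • AffineMap.lineMap 1 u t := by
    rw [AffineMap.lineMap_apply, vsub_eq_sub, vadd_eq_add, smul_add, smul_smul, neg_mul,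
      inv_mul_cancel₀ ht0, Algebra.algebraMap_eq_smul_one, sub_smul, one_smul]
    module
  rw [spectrum.mem_iff, hscale]
  exact fun h => ht ((isUnit_smul_iff (Units.mk0 (-t⁻¹) (by simpa using ht0)) _).1 h)

theorem Units.mem_connectedComponent_one_of_finiteDimensional (u : Aˣ) :
    u ∈ connectedComponent (1 : Aˣ) := by
  have := FiniteDimensional.complete ℂ A
  set Z := {t : ℂ | ¬IsUnit (AffineMap.lineMap 1 (u : A) t)}
  have hZc : IsPreconnected Zᶜ :=
    ((finite_setOf_not_isUnit_lineMap (u : A)).countable.isPathConnected_compl_of_one_lt_rank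
      (by simp)).isConnected.isPreconnected
  have hsegment : IsPreconnected (AffineMap.lineMap 1 (u : A) '' Zᶜ) :=
    hZc.image _ AffineMap.lineMap_continuous.continuousOn
  have hunits : AffineMap.lineMap 1 (u : A) '' Zᶜ ⊆ Set.range Units.val := by
    rintro _ ⟨t, ht, rfl⟩
    exact not_not.1 ht
  exact (hsegment.preimage_of_isOpenMap Units.val_injective Units.isOpenMap_val hunits
    ).subset_connectedComponent ⟨0, by simp [Z], by simp⟩ ⟨1, by simp [Z], by simp⟩

end FiniteDimensional

section Exponential

def expSubgroup (A : Type*) [NormedCommRing A] [NormedAlgebra ℚ A] [CompleteSpace A] :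
    Subgroup Aˣ where
  carrier := Units.val ⁻¹' Set.range exp
  one_mem' := ⟨0, exp_zero⟩
  mul_mem' := by
    rintro _ _ ⟨a, ha⟩ ⟨b, hb⟩
    exact ⟨a + b, by rw [Units.val_mul, ← ha, ← hb, exp_add]⟩
  inv_mem' := by
    rintro u ⟨a, ha⟩
    refine ⟨-a, (Units.inv_eq_of_mul_eq_one_right ?_).symm⟩
    rw [← ha, ← exp_add, add_neg_cancel, exp_zero]

variable {A : Type*} [NormedCommRing A] [CompleteSpace A]

lemma range_exp_mem_nhds_one (𝕂 : Type*) [RCLike 𝕂] [NormedAlgebra 𝕂 A] :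
    Set.range (exp : A → A) ∈ 𝓝 1 := by
  have h := (hasStrictFDerivAt_exp_zero (𝕂 := 𝕂) (𝔸 := A)).map_nhds_eq_of_equiv
    (f' := ContinuousLinearEquiv.refl 𝕂 A)
  rw [exp_zero] at h
  exact h ▸ Filter.range_mem_map

theorem exists_exp_eq_of_mem_connectedComponent_one (𝕂 : Type*) [RCLike 𝕂] [NormedAlgebra 𝕂 A]
    {u : Aˣ} (hu : u ∈ connectedComponent 1) : ∃ a : A, exp a = u := by
  let := NormedAlgebra.restrictScalars ℚ 𝕂 A
  have hnhds : Units.val ⁻¹' Set.range (exp : A → A) ∈ 𝓝 1 :=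
    Units.continuous_val.continuousAt.preimage_mem_nhds (by
      simpa using range_exp_mem_nhds_one (A := A) 𝕂)
  have hopen : IsOpen (expSubgroup A : Set Aˣ) := Subgroup.isOpen_of_mem_nhds _ hnhds
  exact IsClopen.connectedComponent_subset
    ⟨Subgroup.isClosed_of_isOpen _ hopen, hopen⟩ (one_mem _) hu

theorem exists_pow_eq_of_mem_connectedComponent_one (𝕂 : Type*) [RCLike 𝕂] [NormedAlgebra 𝕂 A]
    {u : Aˣ} (hu : u ∈ connectedComponent 1) {m : ℕ} (hm : m ≠ 0) : ∃ v : Aˣ, v ^ m = u := by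
  let := NormedAlgebra.restrictScalars ℚ 𝕂 A
  obtain ⟨a, ha⟩ := exists_exp_eq_of_mem_connectedComponent_one 𝕂 hu
  refine ⟨(isUnit_exp ((m : 𝕂)⁻¹ • a)).unit, Units.ext ?_⟩
  rw [Units.val_pow_eq_pow_val, IsUnit.unit_spec, ← exp_nsmul, ← ha, ← Nat.cast_smul_eq_nsmul 𝕂,
    smul_smul, mul_inv_cancel₀ (Nat.cast_ne_zero.2 hm), one_smul]

end Exponential

noncomputable instance Subalgebra.centralizer_centralizer_singleton.instNormedCommRing
    {R A : Type*} [CommRing R] [NormedRing A] [Algebra R A] (a : A) :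
    NormedCommRing (Subalgebra.centralizer R (Subalgebra.centralizer R {a} : Set A)) :=
  { SubringClass.toNormedRing _ with
    mul_comm := fun x y => Subtype.ext <|
      Set.centralizer_centralizer_comm_of_comm (by simp) _ x.2 _ y.2 }

attribute [local instance] Matrix.linftyOpNormedRing Matrix.linftyOpNormedAlgebra

theorem stmt_3 {n : ℕ} (K : GL (Fin n) ℂ) (m : ℕ) (hm : 0 < m) :
    ∃ Khat : GL (Fin n) ℂ, Khat ^ m = K ∧
      ∀ A : GL (Fin n) ℂ, A * K = K * A → A * Khat = Khat * A := by
  set C := Subalgebra.centralizer ℂ {(K : Matrix (Fin n) (Fin n) ℂ)}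
  set S := Subalgebra.centralizer ℂ (C : Set (Matrix (Fin n) (Fin n) ℂ))
  have hK : (K : Matrix (Fin n) (Fin n) ℂ) ∈ S := Set.subset_centralizer_centralizer rfl
  have hKinv : ((K⁻¹ : GL (Fin n) ℂ) : Matrix (Fin n) (Fin n) ℂ) ∈ S := fun g hg =>
    (Commute.units_inv_right (hg _ rfl).symm).eq
  let KS : Sˣ := ⟨⟨K, hK⟩, ⟨_, hKinv⟩, Subtype.ext K.mul_inv, Subtype.ext K.inv_mul⟩
  obtain ⟨v, hv⟩ := exists_pow_eq_of_mem_connectedComponent_one ℂ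
    (Units.mem_connectedComponent_one_of_finiteDimensional KS) hm.ne'
  refine ⟨Units.map S.val.toMonoidHom v, by rw [← map_pow, hv]; rfl, fun A hA => ?_⟩
  have hAC : (A : Matrix (Fin n) (Fin n) ℂ) ∈ C := by
    rintro _ rfl
    exact congrArg Units.val hA.symm
  exact Units.ext ((v : S).2 _ hAC)
end

section
/- Let M be a group and Γ ⊆ Z(M) a central subgroup isomorphic to ℤ such that M/Γ is finite. Then there exists a finite normal subgroup R of M such that M/R is isomorphic to ℤ. -/
/-!
On the central subgroup `Γ` the transfer `M →* Γ ≃* ℤ` is `γ ↦ γ ^ [M : Γ]`, which is injective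
because `ℤ` is torsion-free. Hence its kernel meets `Γ` trivially and embeds into the finite
group `M ⧸ Γ`, while its image is an infinite subgroup of `ℤ`, hence again infinite cyclic.
-/

open Subgroup

theorem Subgroup.finite_of_disjoint {G : Type*} [Group G] {H K : Subgroup G} [H.FiniteIndex]
    (h : Disjoint K H) : Finite K := by
  have hK : Nat.card K = H.relIndex K := by
    rw [← relIndex_bot_left, ← h.eq_bot, inf_comm, inf_relIndex_right]
  exact Nat.finite_of_card_ne_zero (hK ▸ isFiniteRelIndex_of_finiteIndex.relIndex_ne_zero)

namespace MonoidHom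

variable {G A : Type*} [Group G] [CommGroup A] {H : Subgroup G} [H.FiniteIndex]

open scoped IsMulCommutative in
theorem transfer_eq_pow_index_of_le_center (hH : H ≤ center G) (ϕ : H →* A) (h : H) :
    transfer ϕ h = ϕ h ^ H.index := by
  have key : ∀ (k : ℕ) (g₀ : G), g₀⁻¹ * (h : G) ^ k * g₀ ∈ H →
      g₀⁻¹ * (h : G) ^ k * g₀ = (h : G) ^ k := fun k g₀ hk => by
    rw [← mul_right_inj, ← (hH hk).comm, mul_inv_cancel_right]
  rw [transfer_eq_pow ϕ h key, ← map_pow]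
  rfl

open scoped IsMulCommutative in
theorem injective_domRestrict_transfer_of_le_center [IsMulTorsionFree A] (hH : H ≤ center G)
    {ϕ : H →* A} (hϕ : Function.Injective ϕ) :
    Function.Injective ((transfer ϕ).domRestrict H) := by
  intro x y hxy
  simp only [domRestrict_apply, transfer_eq_pow_index_of_le_center hH] at hxy
  exact hϕ (pow_left_injective FiniteIndex.index_ne_zero hxy)

end MonoidHom

theorem MonoidHom.exists_surjective_ker_eq {G : Type*} [Group G] (f : G →* Multiplicative ℤ)
    [Infinite f.range] :
    ∃ ψ : G →* Multiplicative ℤ, Function.Surjective ψ ∧ ψ.ker = f.ker := by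
  let ι : f.range ≃* Multiplicative ℤ := intCyclicMulEquiv.symm
  refine ⟨(ι : f.range →* Multiplicative ℤ).comp f.rangeRestrict,
    ι.surjective.comp f.rangeRestrict_surjective, ?_⟩
  rw [ker_mulEquiv_comp, ker_rangeRestrict]

/-- The finite normal subgroup is `R = φ.ker`, so that `M ⧸ R ≃* ℤ`. -/
theorem stmt_5 {M : Type*} [Group M] (Γ : Subgroup M) (hΓc : Γ ≤ Subgroup.center M)
    (hΓZ : Nonempty (Γ ≃* Multiplicative ℤ)) (hfin : Finite (M ⧸ Γ)) :
    ∃ φ : M →* Multiplicative ℤ, Function.Surjective φ ∧ Finite φ.ker := by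
  have : Γ.FiniteIndex := finiteIndex_of_finite_quotient
  obtain ⟨e⟩ := hΓZ
  set f := MonoidHom.transfer e.toMonoidHom
  have hf : Function.Injective (f.domRestrict Γ) :=
    MonoidHom.injective_domRestrict_transfer_of_le_center hΓc e.injective
  have hker : Disjoint f.ker Γ := by
    rw [← subgroupOf_eq_bot, ← MonoidHom.ker_domRestrict, (MonoidHom.ker_eq_bot_iff _).mpr hf]
  have : Infinite Γ := Infinite.of_injective e.symm e.symm.injective
  have : Infinite f.range :=
    Infinite.of_injective (fun x : Γ => f.rangeRestrict x) fun x y h => hf (congrArg Subtype.val h)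
  obtain ⟨ψ, hψ, hψker⟩ := f.exists_surjective_ker_eq
  exact ⟨ψ, hψ, hψker ▸ finite_of_disjoint hker⟩
end

section
/- Let M be a group with a central subgroup Γ ≅ ℤ of finite index n. Then the kernel of the homomorphism a ↦ a^n (the transfer into Γ) is a finite normal subgroup of M, and the quotient of M by this kernel is isomorphic to ℤ. -/
open Subgroup

lemma aux_subgroup_mint (H : Subgroup (Multiplicative ℤ)) (hH : H ≠ ⊥) :
    Nonempty (H ≃* Multiplicative ℤ) := by
  obtain ⟨a, ha⟩ := Int.subgroup_cyclic (Subgroup.toAddSubgroup' H)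
  have ha0 : a ≠ 0 := by
    rintro rfl
    apply hH
    have : Subgroup.toAddSubgroup' H = ⊥ := by rw [ha]; simp
    simpa using congrArg (Subgroup.toAddSubgroup'.symm) this
  have hmem : ∀ x : Multiplicative ℤ, x ∈ H ↔ x.toAdd ∈ AddSubgroup.zmultiples a := by
    intro x
    have : Subgroup.toAddSubgroup' H = AddSubgroup.zmultiples a := by
      rw [ha, AddSubgroup.zmultiples_eq_closure]
    rw [← this]; rfl
  have hH' : H = Subgroup.zpowers (Multiplicative.ofAdd a) := by
    ext x
    rw [hmem, Subgroup.mem_zpowers_iff]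
    constructor
    · rintro ⟨k, hk⟩
      exact ⟨k, Multiplicative.toAdd.injective (by simpa using hk)⟩
    · rintro ⟨k, rfl⟩
      exact ⟨k, by simp⟩
  have hinj : Function.Injective (zpowersHom (Multiplicative ℤ) (Multiplicative.ofAdd a)) := by
    intro x y hxy
    apply Multiplicative.toAdd.injective
    have := congrArg Multiplicative.toAdd hxy
    simp only [zpowersHom_apply, Int.toAdd_zpow, toAdd_ofAdd] at this
    exact mul_left_cancel₀ ha0 this
  have e1 : Multiplicative ℤ ≃* (zpowersHom (Multiplicative ℤ) (Multiplicative.ofAdd a)).range :=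
    MonoidHom.ofInjective hinj
  have e2 : H ≃* (zpowersHom (Multiplicative ℤ) (Multiplicative.ofAdd a)).range :=
    MulEquiv.subgroupCongr (by rw [hH', ← Subgroup.range_zpowersHom])
  exact ⟨e2.trans e1.symm⟩

theorem stmt_7 {M : Type*} [Group M] (Γ : Subgroup M) (hΓc : Γ ≤ Subgroup.center M)
    (hΓZ : Nonempty (Γ ≃* Multiplicative ℤ)) (n : ℕ) (hn : Γ.index = n) (hn0 : n ≠ 0) :
    ∃ ρ : M →* M, (∀ a : M, ρ a = a ^ n) ∧ (∀ a : M, ρ a ∈ Γ) ∧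
      ρ.ker.Normal ∧ Finite ρ.ker ∧ Nonempty (M ⧸ ρ.ker ≃* Multiplicative ℤ) := by
  obtain ⟨e⟩ := hΓZ
  haveI : Γ.FiniteIndex := ⟨by rw [hn]; exact hn0⟩
  haveI hΓn : Γ.Normal := ⟨fun x hx g => by
    have := (hΓc hx).comm g
    -- this : x * g = g * x
    have : g * x * g⁻¹ = x := by rw [← this, mul_inv_cancel_right]
    rwa [this]⟩
  -- key hypothesis for transfer
  have key : ∀ (g : M) (k : ℕ) (g₀ : M), g₀⁻¹ * g ^ k * g₀ ∈ Γ → g₀⁻¹ * g ^ k * g₀ = g ^ k := by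
    intro g k g₀ hk
    have h1 := (hΓc hk).comm g₀
    -- h1 : (g₀⁻¹ * g ^ k * g₀) * g₀ = g₀ * (g₀⁻¹ * g ^ k * g₀)  (or reversed)
    calc g₀⁻¹ * g ^ k * g₀ = g₀ * (g₀⁻¹ * g ^ k * g₀) * g₀⁻¹ := by rw [← h1, mul_inv_cancel_right]
    _ = g ^ k := by group
  set f : M →* Multiplicative ℤ := MonoidHom.transfer e.toMonoidHom with hf
  have hfval : ∀ g : M, f g = e ⟨g ^ n, hn ▸ Γ.pow_index_mem g⟩ := by
    intro g
    rw [hf]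
    rw [MonoidHom.transfer_eq_pow e.toMonoidHom g (key g)]
    exact congrArg e (Subtype.ext (by show g ^ Γ.index = g ^ n; rw [hn]))
  set ρ' : M →* Γ := e.symm.toMonoidHom.comp f with hρ'
  set ρ : M →* M := Γ.subtype.comp ρ' with hρ
  have hρval : ∀ a : M, ρ a = a ^ n := by
    intro a
    simp [hρ, hρ', hfval a]
  have hρmem : ∀ a : M, ρ a ∈ Γ := fun a => (ρ' a).2
  have hker : ρ.ker = f.ker := by
    ext x
    simp only [MonoidHom.mem_ker, hρ, hρ', MonoidHom.comp_apply, MulEquiv.coe_toMonoidHom]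
    constructor
    · intro h
      have : e.symm (f x) = 1 := Subtype.ext h
      simpa using congrArg e this
    · intro h; rw [h]; simp
  -- elements of kernel satisfy x ^ n = 1
  have hker_pow : ∀ x ∈ ρ.ker, x ^ n = 1 := by
    intro x hx
    have := hρval x
    rw [MonoidHom.mem_ker] at hx
    rw [← this, hx]
  -- kernel meets Γ trivially
  have hbot : Γ.subgroupOf ρ.ker = ⊥ := by
    rw [eq_bot_iff]
    rintro ⟨x, hx⟩ hxΓ
    have hxn : x ^ n = 1 := hker_pow x hx
    have hxΓ' : x ∈ Γ := hxΓ
    have : (e ⟨x, hxΓ'⟩) ^ n = 1 := by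
      rw [← map_pow]
      have : (⟨x, hxΓ'⟩ : Γ) ^ n = 1 := Subtype.ext (by simpa using hxn)
      rw [this, map_one]
    have h0 : (e ⟨x, hxΓ'⟩).toAdd * (n : ℤ) = 0 := by
      have h1 := congrArg Multiplicative.toAdd this
      rwa [Int.toAdd_pow, toAdd_one] at h1
    have : (e ⟨x, hxΓ'⟩).toAdd = 0 := by
      rcases mul_eq_zero.mp h0 with h | h
      · exact h
      · exact absurd (by exact_mod_cast h) hn0
    have : e ⟨x, hxΓ'⟩ = 1 := Multiplicative.toAdd.injective (by simpa using this)
    have : (⟨x, hxΓ'⟩ : Γ) = 1 := by simpa using congrArg e.symm this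
    simp only [Subgroup.mem_bot]
    exact Subtype.ext (by simpa using congrArg Subtype.val this)
  -- finiteness of kernel
  have hfin : Finite ρ.ker := by
    have hdvd : Γ.relIndex ρ.ker ∣ Γ.index := Subgroup.relIndex_dvd_index_of_normal Γ ρ.ker
    rw [Subgroup.relIndex, hbot, Subgroup.index_bot, hn] at hdvd
    exact Nat.finite_of_card_ne_zero fun h => hn0 (Nat.eq_zero_of_zero_dvd (h ▸ hdvd))
  refine ⟨ρ, hρval, hρmem, inferInstance, hfin, ?_⟩
  have hrange : f.range ≠ ⊥ := by
    intro hb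
    set γ : Γ := e.symm (Multiplicative.ofAdd 1) with hγ
    have h1 : f (γ : M) = Multiplicative.ofAdd (n : ℤ) := by
      rw [hfval]
      have h2 : (⟨(γ : M) ^ n, hn ▸ Γ.pow_index_mem (γ : M)⟩ : Γ) = γ ^ n :=
        Subtype.ext (by simp)
      rw [h2, map_pow, hγ, MulEquiv.apply_symm_apply]
      apply Multiplicative.toAdd.injective
      rw [Int.toAdd_pow]
      simp
    have h3 : f (γ : M) ∈ f.range := ⟨(γ : M), rfl⟩
    rw [hb, Subgroup.mem_bot, h1] at h3
    have := congrArg Multiplicative.toAdd h3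
    simp at this
    exact hn0 (by exact_mod_cast this)
  obtain ⟨e2⟩ := aux_subgroup_mint f.range hrange
  have e3 : (M ⧸ ρ.ker) ≃* (M ⧸ f.ker) := QuotientGroup.quotientMulEquivOfEq hker
  exact ⟨(e3.trans (QuotientGroup.quotientKerEquivRange f)).trans e2⟩
end

section
/- Let H be a finite group, N a subgroup of the center of H, g : H → H' = H/N the canonical projection, and ψ : H → Γ' a homomorphism into an abelian group Γ'. Suppose ker g ∩ ker ψ = {e}. Then the minimal index of an abelian subgroup of H equals the minimal index of an abelian subgroup of H'. -/
open scoped commutatorElement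

/-!
The image of an abelian subgroup of `H` in `H/N` is abelian, and its index divides the original
one. Conversely the preimage of an abelian subgroup of `H/N` has the same index, and it is
abelian: the commutator of two of its elements dies both in `H/N` and in the abelian group `Γ'`,
and these two kernels meet trivially.
-/

namespace Subgroup

variable (G : Type*) [Group G]

/-- By the `sInf` convention this is `0` as soon as some abelian subgroup has infinite index. -/
noncomputable def minAbelianIndex : ℕ :=
  sInf {k : ℕ | ∃ A : Subgroup G, IsMulCommutative A ∧ A.index = k}

variable {G}

theorem exists_isMulCommutative_index_eq_minAbelianIndex :
    ∃ A : Subgroup G, IsMulCommutative A ∧ A.index = minAbelianIndex G :=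
  Nat.sInf_mem (s := {k | ∃ A : Subgroup G, IsMulCommutative A ∧ A.index = k})
    ⟨_, ⊥, ⟨⟨fun _ _ => Subsingleton.elim _ _⟩⟩, rfl⟩

theorem minAbelianIndex_le_index (A : Subgroup G) [IsMulCommutative A] :
    minAbelianIndex G ≤ A.index :=
  Nat.sInf_le ⟨A, inferInstance, rfl⟩

variable {Q Γ : Type*} [Group Q] [CommGroup Γ]

theorem isMulCommutative_comap_of_ker_inf_ker_eq_bot {f : G →* Q} {ψ : G →* Γ}
    (hker : f.ker ⊓ ψ.ker = ⊥) (A : Subgroup Q) [IsMulCommutative A] :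
    IsMulCommutative (A.comap f) := by
  refine ⟨⟨fun a b => Subtype.ext ?_⟩⟩
  have hf : ⁅(a : G), (b : G)⁆ ∈ f.ker := by
    have hab : (⟨f a, a.2⟩ : A) * ⟨f b, b.2⟩ = ⟨f b, b.2⟩ * ⟨f a, a.2⟩ :=
      IsMulCommutative.is_comm.comm _ _
    rw [MonoidHom.mem_ker, map_commutatorElement, commutatorElement_eq_one_iff_mul_comm]
    exact congrArg Subtype.val hab
  have hψ : ⁅(a : G), (b : G)⁆ ∈ ψ.ker := by
    rw [MonoidHom.mem_ker, map_commutatorElement, commutatorElement_eq_one_iff_mul_comm]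
    exact mul_comm _ _
  have hab : ⁅(a : G), (b : G)⁆ ∈ f.ker ⊓ ψ.ker := ⟨hf, hψ⟩
  rw [hker, mem_bot] at hab
  exact commutatorElement_eq_one_iff_mul_comm.mp hab

theorem minAbelianIndex_le_of_surjective [Finite G] {f : G →* Q} (hf : Function.Surjective f) :
    minAbelianIndex Q ≤ minAbelianIndex G := by
  obtain ⟨A, hA, hidx⟩ := exists_isMulCommutative_index_eq_minAbelianIndex (G := G)
  calc minAbelianIndex Q ≤ (A.map f).index := minAbelianIndex_le_index _
    _ ≤ A.index := Nat.le_of_dvd (Nat.pos_of_ne_zero index_ne_zero_of_finite) (index_map_dvd A hf)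
    _ = minAbelianIndex G := hidx

theorem minAbelianIndex_le_of_ker_inf_ker_eq_bot {f : G →* Q} (hf : Function.Surjective f)
    {ψ : G →* Γ} (hker : f.ker ⊓ ψ.ker = ⊥) : minAbelianIndex G ≤ minAbelianIndex Q := by
  obtain ⟨A, hA, hidx⟩ := exists_isMulCommutative_index_eq_minAbelianIndex (G := Q)
  have := isMulCommutative_comap_of_ker_inf_ker_eq_bot hker A
  calc minAbelianIndex G ≤ (A.comap f).index := minAbelianIndex_le_index _
    _ = minAbelianIndex Q := by rw [index_comap_of_surjective A hf, hidx]

theorem minAbelianIndex_eq_of_ker_inf_ker_eq_bot [Finite G] {f : G →* Q}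
    (hf : Function.Surjective f) {ψ : G →* Γ} (hker : f.ker ⊓ ψ.ker = ⊥) :
    minAbelianIndex G = minAbelianIndex Q :=
  (minAbelianIndex_le_of_ker_inf_ker_eq_bot hf hker).antisymm (minAbelianIndex_le_of_surjective hf)

end Subgroup

theorem stmt_8_general {H : Type*} [Group H] [Finite H] (N : Subgroup H) [N.Normal]
    {Γ' : Type*} [CommGroup Γ'] (ψ : H →* Γ')
    (hker : (QuotientGroup.mk' N).ker ⊓ ψ.ker = ⊥) :
    sInf {k : ℕ | ∃ A : Subgroup H, IsMulCommutative A ∧ A.index = k} =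
      sInf {k : ℕ | ∃ A' : Subgroup (H ⧸ N), IsMulCommutative A' ∧ A'.index = k} :=
  Subgroup.minAbelianIndex_eq_of_ker_inf_ker_eq_bot (QuotientGroup.mk'_surjective N) hker

theorem stmt_8 {H : Type*} [Group H] [Finite H] (N : Subgroup H) [N.Normal]
    (hN : N ≤ Subgroup.center H)
    {Γ' : Type*} [CommGroup Γ'] (ψ : H →* Γ')
    (hker : (QuotientGroup.mk' N).ker ⊓ ψ.ker = ⊥) :
    sInf {k : ℕ | ∃ A : Subgroup H, IsMulCommutative A ∧ A.index = k} =
      sInf {k : ℕ | ∃ A' : Subgroup (H ⧸ N), IsMulCommutative A' ∧ A'.index = k} :=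
  stmt_8_general N ψ hker
end
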